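/- arXiv:1507.06005 — 3 statements merged into one kernel-verified Lean document; each statement's English description precedes it below -/
import Mathlib

section
/- If smooth functions u(x,t), v(x,t) satisfy the system u_t = u_{xxx} + 3u u_{xx} + 3u^2 u_x + 3u_x^2 + v_{xx} + 2v u_x and v_t = v_{xxx} - 3u v_{xx} + 6v u_{xx} + 3u_x v_x + 3u^2 v_x + 2v v_x, then the functions w = u_x and z = v + (3/2)u^2 satisfy the Karasu system w_t = w_{xxx} + z_{xxx} + 2 w_x z + 2 w z_x and z_t = z_{xxx} - 9 w w_x + 6 z w_x + 3 w z_x + 2 z z_x. -/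
noncomputable def px (f : ℝ → ℝ → ℝ) : ℝ → ℝ → ℝ := fun x t => deriv (fun y => f y t) x
noncomputable def pt (f : ℝ → ℝ → ℝ) : ℝ → ℝ → ℝ := fun x t => deriv (fun s => f x s) t

private def S (f : ℝ → ℝ → ℝ) : Prop := ContDiff ℝ (⊤ : ℕ∞) (fun p : ℝ × ℝ => f p.1 p.2)

private lemma hasDerivAt_x {f : ℝ → ℝ → ℝ} (hf : S f) (x t : ℝ) :
    HasDerivAt (fun y => f y t) (px f x t) x := by
  have h : ContDiff ℝ (⊤ : ℕ∞) (fun y : ℝ => f y t) :=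
    hf.comp (contDiff_id.prodMk contDiff_const)
  exact ((h.differentiable (by simp)) x).hasDerivAt

private lemma hasDerivAt_t {f : ℝ → ℝ → ℝ} (hf : S f) (x t : ℝ) :
    HasDerivAt (fun s => f x s) (pt f x t) t := by
  have h : ContDiff ℝ (⊤ : ℕ∞) (fun s : ℝ => f x s) :=
    hf.comp (contDiff_const.prodMk contDiff_id)
  exact ((h.differentiable (by simp)) t).hasDerivAt

private lemma px_eq_fderiv {f : ℝ → ℝ → ℝ} (hf : S f) (x t : ℝ) :
    px f x t = fderiv ℝ (fun p : ℝ × ℝ => f p.1 p.2) (x, t) (1, 0) := by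
  have hF : HasFDerivAt (fun p : ℝ × ℝ => f p.1 p.2)
      (fderiv ℝ (fun p : ℝ × ℝ => f p.1 p.2) (x, t)) (x, t) :=
    ((hf.differentiable (by simp)) (x, t)).hasFDerivAt
  have hc : HasDerivAt (fun y : ℝ => (y, t)) ((1 : ℝ), (0 : ℝ)) x :=
    (hasDerivAt_id x).prodMk (hasDerivAt_const x t)
  exact (hF.comp_hasDerivAt x hc).deriv

private lemma S_px {f : ℝ → ℝ → ℝ} (hf : S f) : S (px f) := by
  have hfd : ContDiff ℝ (⊤ : ℕ∞) (fderiv ℝ (fun p : ℝ × ℝ => f p.1 p.2)) :=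
    hf.fderiv_right (by simp)
  have : (fun p : ℝ × ℝ => px f p.1 p.2) =
      fun p : ℝ × ℝ => fderiv ℝ (fun q : ℝ × ℝ => f q.1 q.2) p ((1 : ℝ), (0 : ℝ)) := by
    funext p
    exact px_eq_fderiv hf p.1 p.2
  show ContDiff ℝ (⊤ : ℕ∞) (fun p : ℝ × ℝ => px f p.1 p.2)
  rw [this]
  exact (ContinuousLinearMap.apply ℝ ℝ ((1 : ℝ), (0 : ℝ))).contDiff.comp hfd

private lemma pt_px_comm {f : ℝ → ℝ → ℝ} (hf : S f) (x t : ℝ) :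
    pt (px f) x t = px (pt f) x t := by
  set F := fun p : ℝ × ℝ => f p.1 p.2 with hFdef
  have hdF : Differentiable ℝ F := hf.differentiable (by simp)
  have hfd : ContDiff ℝ (⊤ : ℕ∞) (fderiv ℝ F) := hf.fderiv_right (by simp)
  have hdfd : Differentiable ℝ (fderiv ℝ F) := hfd.differentiable (by simp)
  set D := fderiv ℝ (fderiv ℝ F) (x, t) with hD
  have hsym := second_derivative_symmetric (f := F) (f' := fderiv ℝ F) (f'' := D)
    (fun y => (hdF y).hasFDerivAt) ((hdfd (x, t)).hasFDerivAt)
  -- pt (px f) x t = D (0,1) (1,0)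
  have h1 : pt (px f) x t = D ((0 : ℝ), (1 : ℝ)) ((1 : ℝ), (0 : ℝ)) := by
    have hsl : (fun s => px f x s) =
        fun s => (ContinuousLinearMap.apply ℝ ℝ ((1 : ℝ), (0 : ℝ))) (fderiv ℝ F (x, s)) := by
      funext s; exact px_eq_fderiv hf x s
    have hcurve : HasDerivAt (fun s : ℝ => (x, s)) ((0 : ℝ), (1 : ℝ)) t :=
      (hasDerivAt_const t x).prodMk (hasDerivAt_id t)
    have hcomp : HasFDerivAt
        (fun p : ℝ × ℝ => (ContinuousLinearMap.apply ℝ ℝ ((1 : ℝ), (0 : ℝ))) (fderiv ℝ F p))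
        ((ContinuousLinearMap.apply ℝ ℝ ((1 : ℝ), (0 : ℝ))).comp D) (x, t) :=
      (ContinuousLinearMap.apply ℝ ℝ ((1 : ℝ), (0 : ℝ))).hasFDerivAt.comp (x, t)
        ((hdfd (x, t)).hasFDerivAt)
    have H : HasDerivAt
        (fun s : ℝ => (ContinuousLinearMap.apply ℝ ℝ ((1 : ℝ), (0 : ℝ))) (fderiv ℝ F (x, s)))
        (((ContinuousLinearMap.apply ℝ ℝ ((1 : ℝ), (0 : ℝ))).comp D) ((0 : ℝ), (1 : ℝ))) t :=
      hcomp.comp_hasDerivAt t hcurve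
    show deriv (fun s => px f x s) t = _
    rw [hsl, H.deriv]
    simp [ContinuousLinearMap.apply_apply]
  have h2 : px (pt f) x t = D ((1 : ℝ), (0 : ℝ)) ((0 : ℝ), (1 : ℝ)) := by
    have hpt : ∀ y s : ℝ, pt f y s = fderiv ℝ F (y, s) ((0 : ℝ), (1 : ℝ)) := by
      intro y s
      have hF : HasFDerivAt F (fderiv ℝ F (y, s)) (y, s) := (hdF (y, s)).hasFDerivAt
      have hc : HasDerivAt (fun r : ℝ => (y, r)) ((0 : ℝ), (1 : ℝ)) s :=
        (hasDerivAt_const s y).prodMk (hasDerivAt_id s)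
      exact (hF.comp_hasDerivAt s hc).deriv
    have hsl : (fun y => pt f y t) =
        fun y => (ContinuousLinearMap.apply ℝ ℝ ((0 : ℝ), (1 : ℝ))) (fderiv ℝ F (y, t)) := by
      funext y; exact hpt y t
    have hcurve : HasDerivAt (fun y : ℝ => (y, t)) ((1 : ℝ), (0 : ℝ)) x :=
      (hasDerivAt_id x).prodMk (hasDerivAt_const x t)
    have hcomp : HasFDerivAt
        (fun p : ℝ × ℝ => (ContinuousLinearMap.apply ℝ ℝ ((0 : ℝ), (1 : ℝ))) (fderiv ℝ F p))
        ((ContinuousLinearMap.apply ℝ ℝ ((0 : ℝ), (1 : ℝ))).comp D) (x, t) :=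
      (ContinuousLinearMap.apply ℝ ℝ ((0 : ℝ), (1 : ℝ))).hasFDerivAt.comp (x, t)
        ((hdfd (x, t)).hasFDerivAt)
    have H : HasDerivAt
        (fun y : ℝ => (ContinuousLinearMap.apply ℝ ℝ ((0 : ℝ), (1 : ℝ))) (fderiv ℝ F (y, t)))
        (((ContinuousLinearMap.apply ℝ ℝ ((0 : ℝ), (1 : ℝ))).comp D) ((1 : ℝ), (0 : ℝ))) x :=
      hcomp.comp_hasDerivAt (f := fun y : ℝ => (y, t)) x hcurve
    show deriv (fun y => pt f y t) x = _
    rw [hsl, H.deriv]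
    simp [ContinuousLinearMap.apply_apply]
  rw [h1, h2, hsym]

/-- The Miura-type transformation `w = u_x`, `z = v + (3/2)u²` maps solutions of
system (1.2) to solutions of the Karasu system (1.1). -/
theorem miura_to_karasu (u v : ℝ → ℝ → ℝ)
    (hu : ContDiff ℝ (⊤ : ℕ∞) (fun p : ℝ × ℝ => u p.1 p.2))
    (hv : ContDiff ℝ (⊤ : ℕ∞) (fun p : ℝ × ℝ => v p.1 p.2))
    (hequ : ∀ x t, pt u x t =
      px (px (px u)) x t + 3 * u x t * px (px u) x t + 3 * (u x t)^2 * px u x t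
        + 3 * (px u x t)^2 + px (px v) x t + 2 * v x t * px u x t)
    (heqv : ∀ x t, pt v x t =
      px (px (px v)) x t - 3 * u x t * px (px v) x t + 6 * v x t * px (px u) x t
        + 3 * px u x t * px v x t + 3 * (u x t)^2 * px v x t + 2 * v x t * px v x t) :
    ∀ x t,
      (pt (px u) x t =
        px (px (px (px u))) x t
          + px (px (px (fun y s => v y s + (3/2) * (u y s)^2))) x t
          + 2 * px (px u) x t * (v x t + (3/2) * (u x t)^2)
          + 2 * px u x t * px (fun y s => v y s + (3/2) * (u y s)^2) x t)
      ∧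
      (pt (fun y s => v y s + (3/2) * (u y s)^2) x t =
        px (px (px (fun y s => v y s + (3/2) * (u y s)^2))) x t
          - 9 * px u x t * px (px u) x t
          + 6 * (v x t + (3/2) * (u x t)^2) * px (px u) x t
          + 3 * px u x t * px (fun y s => v y s + (3/2) * (u y s)^2) x t
          + 2 * (v x t + (3/2) * (u x t)^2)
              * px (fun y s => v y s + (3/2) * (u y s)^2) x t) := by
  have hSu : S u := hu
  have hSv : S v := hv
  have hSu1 : S (px u) := S_px hSu
  have hSu2 : S (px (px u)) := S_px hSu1
  have hSu3 : S (px (px (px u))) := S_px hSu2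
  have hSv1 : S (px v) := S_px hSv
  have hSv2 : S (px (px v)) := S_px hSv1
  -- first x-derivative of z
  have hz1 : ∀ X T, px (fun y s => v y s + (3/2) * (u y s)^2) X T
      = px v X T + 3 * u X T * px u X T := by
    intro X T
    have d : HasDerivAt (fun y => v y T + (3/2) * (u y T)^2)
        (px v X T + 3 * u X T * px u X T) X := by
      have h := (hasDerivAt_x hSv X T).add
        (((hasDerivAt_x hSu X T).pow 2).const_mul ((3:ℝ)/2))
      refine h.congr_deriv ?_
      push_cast
      ring
    exact d.deriv
  -- second x-derivative of z
  have hz2 : ∀ X T, px (px (fun y s => v y s + (3/2) * (u y s)^2)) X T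
      = px (px v) X T + 3 * (px u X T)^2 + 3 * u X T * px (px u) X T := by
    intro X T
    have hfun : (fun y => px (fun y s => v y s + (3/2) * (u y s)^2) y T)
        = fun y => px v y T + 3 * u y T * px u y T := funext fun y => hz1 y T
    have d : HasDerivAt (fun y => px v y T + 3 * u y T * px u y T)
        (px (px v) X T + 3 * (px u X T)^2 + 3 * u X T * px (px u) X T) X := by
      have h := (hasDerivAt_x hSv1 X T).add
        (((hasDerivAt_x hSu X T).const_mul (3:ℝ)).mul (hasDerivAt_x hSu1 X T))
      refine h.congr_deriv ?_
      ring
    show deriv (fun y => px (fun y s => v y s + (3/2) * (u y s)^2) y T) X = _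
    rw [hfun]
    exact d.deriv
  -- third x-derivative of z
  have hz3 : ∀ X T, px (px (px (fun y s => v y s + (3/2) * (u y s)^2))) X T
      = px (px (px v)) X T + 9 * px u X T * px (px u) X T
        + 3 * u X T * px (px (px u)) X T := by
    intro X T
    have hfun : (fun y => px (px (fun y s => v y s + (3/2) * (u y s)^2)) y T)
        = fun y => px (px v) y T + 3 * (px u y T)^2 + 3 * u y T * px (px u) y T :=
      funext fun y => hz2 y T
    have d : HasDerivAt
        (fun y => px (px v) y T + 3 * (px u y T)^2 + 3 * u y T * px (px u) y T)
        (px (px (px v)) X T + 9 * px u X T * px (px u) X T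
          + 3 * u X T * px (px (px u)) X T) X := by
      have h := ((hasDerivAt_x hSv2 X T).add
          (((hasDerivAt_x hSu1 X T).pow 2).const_mul (3:ℝ))).add
        (((hasDerivAt_x hSu X T).const_mul (3:ℝ)).mul (hasDerivAt_x hSu2 X T))
      refine h.congr_deriv ?_
      push_cast
      ring
    show deriv (fun y => px (px (fun y s => v y s + (3/2) * (u y s)^2)) y T) X = _
    rw [hfun]
    exact d.deriv
  intro x t
  -- t-derivative of z
  have htz : pt (fun y s => v y s + (3/2) * (u y s)^2) x t
      = pt v x t + 3 * u x t * pt u x t := by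
    have d : HasDerivAt (fun s => v x s + (3/2) * (u x s)^2)
        (pt v x t + 3 * u x t * pt u x t) t := by
      have h := (hasDerivAt_t hSv x t).add
        (((hasDerivAt_t hSu x t).pow 2).const_mul ((3:ℝ)/2))
      refine h.congr_deriv ?_
      push_cast
      ring
    exact d.deriv
  -- commute t and x derivatives of u
  have hc : pt (px u) x t = px (pt u) x t := pt_px_comm hSu x t
  -- x-derivative of the u-equation
  have key : px (pt u) x t
      = px (px (px (px u))) x t + 3 * px u x t * px (px u) x t
        + 3 * u x t * px (px (px u)) x t + 6 * u x t * (px u x t)^2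
        + 3 * (u x t)^2 * px (px u) x t + 6 * px u x t * px (px u) x t
        + px (px (px v)) x t + 2 * px v x t * px u x t
        + 2 * v x t * px (px u) x t := by
    have hfun : (fun y => pt u y t) = fun y =>
        px (px (px u)) y t + 3 * u y t * px (px u) y t + 3 * (u y t)^2 * px u y t
          + 3 * (px u y t)^2 + px (px v) y t + 2 * v y t * px u y t :=
      funext fun y => hequ y t
    have d : HasDerivAt (fun y =>
        px (px (px u)) y t + 3 * u y t * px (px u) y t + 3 * (u y t)^2 * px u y t
          + 3 * (px u y t)^2 + px (px v) y t + 2 * v y t * px u y t)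
        (px (px (px (px u))) x t + 3 * px u x t * px (px u) x t
          + 3 * u x t * px (px (px u)) x t + 6 * u x t * (px u x t)^2
          + 3 * (u x t)^2 * px (px u) x t + 6 * px u x t * px (px u) x t
          + px (px (px v)) x t + 2 * px v x t * px u x t
          + 2 * v x t * px (px u) x t) x := by
      have h := (((((hasDerivAt_x hSu3 x t).add
          (((hasDerivAt_x hSu x t).const_mul (3:ℝ)).mul (hasDerivAt_x hSu2 x t))).add
          ((((hasDerivAt_x hSu x t).pow 2).const_mul (3:ℝ)).mul (hasDerivAt_x hSu1 x t))).add
          (((hasDerivAt_x hSu1 x t).pow 2).const_mul (3:ℝ))).add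
          (hasDerivAt_x hSv2 x t)).add
          (((hasDerivAt_x hSv x t).const_mul (2:ℝ)).mul (hasDerivAt_x hSu1 x t))
      refine h.congr_deriv ?_
      push_cast
      simp only [Pi.pow_apply]; ring
    show deriv (fun y => pt u y t) x = _
    rw [hfun]
    exact d.deriv
  constructor
  · rw [hc, key, hz3 x t, hz1 x t]
    ring
  · rw [htz, hequ x t, heqv x t, hz3 x t, hz1 x t]
    ring
end

section
/- For system (3.7) with ε = 1: u_t = u_{xxx} + 3u u_{xx} + 3u² u_x + 3u_x² + (v_{xx} − u v_x − 2v u_x − 2u² v)_x and v_t = v_{xxx} − 3(u v_x − u² v)_x + 2v v_{xx} + v_x² − 6u v v_x − 4v² u_x, the time derivative of the density u·v along solutions is a total x-derivative; i.e., there is an explicit differential polynomial F in u, v and their x-derivatives such that ∂_t(u v) = D_x F whenever (u,v) solves the system. Consequently ∫ u v dx is a conserved quantity. -/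
open MeasureTheory Filter

/-- Explicit flux `F` for the density `u v` of system (3.7) with `ε = 1`:
`∂_t(uv) = D_x F` along solutions. -/
noncomputable def flux37 (u v : ℝ → ℝ → ℝ) : ℝ → ℝ → ℝ := fun x t =>
  3 * u x t * px u x t * v x t + u x t * v x t * px v x t + u x t * px (px v) x t
    - 4 * (u x t)^2 * (v x t)^2 - 3 * (u x t)^2 * px v x t + 3 * (u x t)^3 * v x t
    - 2 * px u x t * (v x t)^2 - px u x t * px v x t + px (px u) x t * v x t
    + v x t * px (px v) x t - (1/2) * (px v x t)^2

lemma hd_x {f : ℝ → ℝ → ℝ} (hf : ContDiff ℝ (⊤ : ℕ∞) (fun p : ℝ × ℝ => f p.1 p.2)) (x t : ℝ) :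
    HasDerivAt (fun y => f y t) (px f x t) x := by
  have h1 : HasDerivAt (fun y : ℝ => (y, t)) ((1:ℝ), (0:ℝ)) x :=
    (hasDerivAt_id x).prodMk (hasDerivAt_const x t)
  have h2 : DifferentiableAt ℝ (fun y => f y t) x :=
    by have h3 := ((((hf.differentiable (by simp)) (x, t)).hasFDerivAt.comp_hasDerivAt x h1)).differentiableAt; exact h3
  exact h2.hasDerivAt

lemma hd_t {f : ℝ → ℝ → ℝ} (hf : ContDiff ℝ (⊤ : ℕ∞) (fun p : ℝ × ℝ => f p.1 p.2)) (x t : ℝ) :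
    HasDerivAt (fun s => f x s) (pt f x t) t := by
  have h1 : HasDerivAt (fun s : ℝ => (x, s)) ((0:ℝ), (1:ℝ)) t :=
    (hasDerivAt_const t x).prodMk (hasDerivAt_id t)
  have h2 : DifferentiableAt ℝ (fun s => f x s) t :=
    ((((hf.differentiable (by simp)) (x, t)).hasFDerivAt.comp_hasDerivAt t h1)).differentiableAt
  exact h2.hasDerivAt

lemma smooth_px {f : ℝ → ℝ → ℝ} (hf : ContDiff ℝ (⊤ : ℕ∞) (fun p : ℝ × ℝ => f p.1 p.2)) :
    ContDiff ℝ (⊤ : ℕ∞) (fun p : ℝ × ℝ => px f p.1 p.2) := by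
  have key : ∀ p : ℝ × ℝ, px f p.1 p.2
      = fderiv ℝ (fun q : ℝ × ℝ => f q.1 q.2) p (1, 0) := by
    intro p
    have h1 : HasDerivAt (fun y : ℝ => (y, p.2)) ((1:ℝ), (0:ℝ)) p.1 :=
      (hasDerivAt_id p.1).prodMk (hasDerivAt_const p.1 p.2)
    have h2 := (((hf.differentiable (by simp)) p).hasFDerivAt.comp_hasDerivAt p.1 h1)
    exact h2.deriv
  have h3 : ContDiff ℝ (⊤ : ℕ∞) (fun p : ℝ × ℝ => fderiv ℝ (fun q : ℝ × ℝ => f q.1 q.2) p (1, 0)) :=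
    (hf.fderiv_right (by simp : ((⊤ : ℕ∞) : WithTop ℕ∞) + 1 ≤ ((⊤ : ℕ∞) : WithTop ℕ∞))).clm_apply contDiff_const
  have h4 : (fun p : ℝ × ℝ => px f p.1 p.2)
      = fun p : ℝ × ℝ => fderiv ℝ (fun q : ℝ × ℝ => f q.1 q.2) p (1, 0) := funext key
  rw [h4]; exact h3

/-- For system (3.7) with `ε = 1`, the time derivative of the density `u v`
along solutions is the total `x`-derivative of the explicit differential
polynomial `flux37`, and consequently `∫ u v dx` is conserved. -/
theorem conservation_37 (u v : ℝ → ℝ → ℝ)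
    (hu : ContDiff ℝ (⊤ : ℕ∞) (fun p : ℝ × ℝ => u p.1 p.2))
    (hv : ContDiff ℝ (⊤ : ℕ∞) (fun p : ℝ × ℝ => v p.1 p.2))
    (hequ : ∀ x t, pt u x t =
      px (px (px u)) x t + 3 * u x t * px (px u) x t + 3 * (u x t)^2 * px u x t
        + 3 * (px u x t)^2
        + px (fun y s => px (px v) y s - u y s * px v y s - 2 * v y s * px u y s
            - 2 * (u y s)^2 * v y s) x t)
    (heqv : ∀ x t, pt v x t =
      px (px (px v)) x t
        - 3 * px (fun y s => u y s * px v y s - (u y s)^2 * v y s) x t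
        + 2 * v x t * px (px v) x t + (px v x t)^2
        - 6 * u x t * v x t * px v x t - 4 * (v x t)^2 * px u x t)
    (hint : ∀ t, Integrable (fun x => u x t * v x t))
    (hint' : ∀ t, Integrable (fun x => pt (fun y s => u y s * v y s) x t))
    (hdiff : ∀ t, HasDerivAt (fun s => ∫ x, u x s * v x s)
      (∫ x, pt (fun y s => u y s * v y s) x t) t)
    (hdecayTop : ∀ t, Tendsto (fun x => flux37 u v x t) atTop (nhds 0))
    (hdecayBot : ∀ t, Tendsto (fun x => flux37 u v x t) atBot (nhds 0)) :
    (∀ x t, pt (fun y s => u y s * v y s) x t = px (flux37 u v) x t)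
    ∧ (∀ t, deriv (fun s => ∫ x, u x s * v x s) t = 0) := by
  have hux := smooth_px hu
  have huxx := smooth_px hux
  have hvx := smooth_px hv
  have hvxx := smooth_px hvx
  have key : ∀ x t, pt (fun y s => u y s * v y s) x t = px (flux37 u v) x t := by
    intro x t
    have hU := hd_x hu x t
    have hV := hd_x hv x t
    have hU1 := hd_x hux x t
    have hV1 := hd_x hvx x t
    have hU2 := hd_x huxx x t
    have hV2 := hd_x hvxx x t
    -- time derivative of the product
    have hL : pt (fun y s => u y s * v y s) x t = pt u x t * v x t + u x t * pt v x t :=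
      ((hd_t hu x t).mul (hd_t hv x t)).deriv
    -- expansion of the inner flux term in the u-equation
    have hA : px (fun y s => px (px v) y s - u y s * px v y s - 2 * v y s * px u y s
        - 2 * (u y s)^2 * v y s) x t = _ :=
      (((hV2.sub (hU.mul hV1)).sub ((hV.const_mul 2).mul hU1)).sub
        (((hU.pow 2).const_mul 2).mul hV)).deriv
    -- expansion of the inner flux term in the v-equation
    have hC : px (fun y s => u y s * px v y s - (u y s)^2 * v y s) x t = _ :=
      ((hU.mul hV1).sub ((hU.pow 2).mul hV)).deriv
    -- derivative of the flux
    have h01 := ((hU.const_mul 3).mul hU1).mul hV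
    have h02 := (hU.mul hV).mul hV1
    have h03 := hU.mul hV2
    have h04 := ((hU.pow 2).const_mul 4).mul (hV.pow 2)
    have h05 := ((hU.pow 2).const_mul 3).mul hV1
    have h06 := ((hU.pow 3).const_mul 3).mul hV
    have h07 := (hU1.const_mul 2).mul (hV.pow 2)
    have h08 := hU1.mul hV1
    have h09 := hU2.mul hV
    have h10 := hV.mul hV2
    have h11 := (hV1.pow 2).const_mul (1/2)
    have hB : px (flux37 u v) x t = _ :=
      ((((((((((h01.add h02).add h03).sub h04).sub h05).add h06).sub h07).sub
        h08).add h09).add h10).sub h11).deriv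
    rw [hL, hequ, heqv, hA, hC, hB]
    simp only [Pi.pow_apply, Pi.mul_apply]
    ring
  refine ⟨key, fun t => ?_⟩
  -- the flux is smooth, hence has the right x-derivative everywhere
  have hflux : ContDiff ℝ (⊤ : ℕ∞) (fun p : ℝ × ℝ => flux37 u v p.1 p.2) := by
    unfold flux37
    exact ((((((((((((contDiff_const.mul hu).mul hux).mul hv).add
      ((hu.mul hv).mul hvx)).add (hu.mul hvxx)).sub
      ((contDiff_const.mul (hu.pow 2)).mul (hv.pow 2))).sub
      ((contDiff_const.mul (hu.pow 2)).mul hvx)).add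
      ((contDiff_const.mul (hu.pow 3)).mul hv)).sub
      ((contDiff_const.mul hux).mul (hv.pow 2))).sub (hux.mul hvx)).add
      (huxx.mul hv)).add (hv.mul hvxx)).sub (contDiff_const.mul (hvx.pow 2))
  have hF : ∀ x, HasDerivAt (fun y => flux37 u v y t) (px (flux37 u v) x t) x :=
    fun x => hd_x hflux x t
  have hI : Integrable (fun x => px (flux37 u v) x t) := by
    have h := hint' t
    have he : (fun x => pt (fun y s => u y s * v y s) x t)
        = fun x => px (flux37 u v) x t := funext fun x => key x t
    rwa [he] at h
  have h1 : ∫ x in Set.Ioi (0:ℝ), px (flux37 u v) x t = 0 - flux37 u v 0 t :=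
    integral_Ioi_of_hasDerivAt_of_tendsto' (fun x _ => hF x)
      hI.integrableOn (hdecayTop t)
  have h2 : ∫ x in Set.Iic (0:ℝ), px (flux37 u v) x t = flux37 u v 0 t - 0 :=
    integral_Iic_of_hasDerivAt_of_tendsto' (fun x _ => hF x)
      hI.integrableOn (hdecayBot t)
  have hsum := intervalIntegral.integral_Iic_add_Ioi (b := (0:ℝ))
    hI.integrableOn hI.integrableOn
  have hd := (hdiff t).deriv
  rw [hd]
  have he : (fun x => pt (fun y s => u y s * v y s) x t)
      = fun x => px (flux37 u v) x t := funext fun x => key x t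
  rw [he]
  rw [← hsum, h1, h2]
  ring
end

section
/- Let r(x,t) > 0 and s(x,t) be smooth with u = r_x/r and v = r s. If r and s satisfy r_t = r_{xxx} + 3ε(2r² s_{xx} + 4 r r_x s_x − s r_x² − s r r_{xx}) + 3ε² s² r² r_x and s_t = s_{xxx} + 3ε r(s s_{xx} + 3 s_x²) + 3ε² r² s² s_x, then u and v satisfy system (3.8): u_t = u_{xxx} + 3u u_{xx} + 3u² u_x + 3u_x² + 3ε(2v_{xx} − 3v u_x − 4u² v)_x + 3ε²(v² u)_x and v_t = v_{xxx} − 3(u v_x − u² v)_x + 3ε(3 v v_x − 4 v² u)_x + 3ε² v² v_x. -/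
noncomputable def DX (F : ℝ×ℝ → ℝ) : ℝ×ℝ → ℝ := fun p => fderiv ℝ F p (1,0)
noncomputable def DT (F : ℝ×ℝ → ℝ) : ℝ×ℝ → ℝ := fun p => fderiv ℝ F p (0,1)

lemma contDiff_DX {F : ℝ×ℝ → ℝ} (hF : ContDiff ℝ (⊤ : ℕ∞) F) : ContDiff ℝ (⊤ : ℕ∞) (DX F) :=
  (hF.fderiv_right (by simp)).clm_apply contDiff_const

lemma contDiff_DT {F : ℝ×ℝ → ℝ} (hF : ContDiff ℝ (⊤ : ℕ∞) F) : ContDiff ℝ (⊤ : ℕ∞) (DT F) :=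
  (hF.fderiv_right (by simp)).clm_apply contDiff_const

lemma px_eq {f : ℝ→ℝ→ℝ} {F : ℝ×ℝ→ℝ} (hF : Differentiable ℝ F)
    (h : ∀ y q, f y q = F (y,q)) : ∀ x t, px f x t = DX F (x,t) := by
  intro x t
  have hl : HasDerivAt (fun y : ℝ => ((y, t) : ℝ×ℝ)) (1,0) x := by
    have := (HasDerivAt.prodMk (hasDerivAt_id x) (hasDerivAt_const x t))
    simpa using this
  have h1 : HasDerivAt (fun y => F (y,t)) (fderiv ℝ F (x,t) (1,0)) x :=
    (hF (x,t)).hasFDerivAt.comp_hasDerivAt x hl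
  have : (fun y => f y t) = fun y => F (y,t) := funext fun y => h y t
  rw [px, this, h1.deriv]; rfl

lemma pt_eq {f : ℝ→ℝ→ℝ} {F : ℝ×ℝ→ℝ} (hF : Differentiable ℝ F)
    (h : ∀ y q, f y q = F (y,q)) : ∀ x t, pt f x t = DT F (x,t) := by
  intro x t
  have hl : HasDerivAt (fun q : ℝ => ((x, q) : ℝ×ℝ)) (0,1) t := by
    have := (HasDerivAt.prodMk (hasDerivAt_const t x) (hasDerivAt_id t))
    simpa using this
  have h1 : HasDerivAt (fun q => F (x,q)) (fderiv ℝ F (x,t) (0,1)) t :=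
    (hF (x,t)).hasFDerivAt.comp_hasDerivAt t hl
  have : (fun q => f x q) = fun q => F (x,q) := funext fun q => h x q
  rw [pt, this, h1.deriv]; rfl

lemma DT_DX_comm {F : ℝ×ℝ → ℝ} (hF : ContDiff ℝ (⊤ : ℕ∞) F) : DT (DX F) = DX (DT F) := by
  funext p
  have hd : Differentiable ℝ F := hF.differentiable (by simp)
  have hd2 : Differentiable ℝ (fderiv ℝ F) :=
    (hF.fderiv_right (m := (⊤ : ℕ∞)) (by simp)).differentiable (by simp)
  have hsym := second_derivative_symmetric
    (fun y => (hd y).hasFDerivAt) (hd2 p).hasFDerivAt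
  have e1 : DT (DX F) p = (fderiv ℝ (fderiv ℝ F) p (0,1)) (1,0) := by
    unfold DT DX
    rw [fderiv_clm_apply (hd2 p) (differentiableAt_const _)]
    simp
  have e2 : DX (DT F) p = (fderiv ℝ (fderiv ℝ F) p (1,0)) (0,1) := by
    unfold DT DX
    rw [fderiv_clm_apply (hd2 p) (differentiableAt_const _)]
    simp
  rw [e1, e2, hsym]

lemma DX_add {A B : ℝ×ℝ→ℝ} (hA : Differentiable ℝ A) (hB : Differentiable ℝ B) :
    DX (fun q => A q + B q) = fun p => DX A p + DX B p := by
  funext p; unfold DX; rw [fderiv_fun_add (hA p) (hB p)]; rfl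

lemma DX_sub {A B : ℝ×ℝ→ℝ} (hA : Differentiable ℝ A) (hB : Differentiable ℝ B) :
    DX (fun q => A q - B q) = fun p => DX A p - DX B p := by
  funext p; unfold DX; rw [fderiv_fun_sub (hA p) (hB p)]; rfl

lemma DX_mul {A B : ℝ×ℝ→ℝ} (hA : Differentiable ℝ A) (hB : Differentiable ℝ B) :
    DX (fun q => A q * B q) = fun p => DX A p * B p + A p * DX B p := by
  funext p; unfold DX; rw [fderiv_fun_mul (hA p) (hB p)]; simp; ring

lemma DX_const (c : ℝ) : DX (fun _ => c) = fun _ => 0 := by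
  funext p; unfold DX; simp

lemma DX_neg {A : ℝ×ℝ→ℝ} : DX (fun q => -A q) = fun p => -DX A p := by
  funext p; unfold DX; rw [fderiv_fun_neg]; rfl

lemma DX_inv {A : ℝ×ℝ→ℝ} (hA : Differentiable ℝ A) (h0 : ∀ p, A p ≠ 0) :
    DX (fun q => (A q)⁻¹) = fun p => -(DX A p * ((A p)⁻¹ * (A p)⁻¹)) := by
  funext p; unfold DX
  have h : HasFDerivAt (fun q => (A q)⁻¹)
      ((ContinuousLinearMap.smulRight (1 : ℝ →L[ℝ] ℝ) (-((A p) ^ 2)⁻¹)).comp (fderiv ℝ A p)) p :=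
    (hasFDerivAt_inv (h0 p)).comp p (hA p).hasFDerivAt
  rw [h.fderiv]
  have h2 := h0 p
  simp [pow_two]

lemma DT_add {A B : ℝ×ℝ→ℝ} (hA : Differentiable ℝ A) (hB : Differentiable ℝ B) :
    DT (fun q => A q + B q) = fun p => DT A p + DT B p := by
  funext p; unfold DT; rw [fderiv_fun_add (hA p) (hB p)]; rfl

lemma DT_mul {A B : ℝ×ℝ→ℝ} (hA : Differentiable ℝ A) (hB : Differentiable ℝ B) :
    DT (fun q => A q * B q) = fun p => DT A p * B p + A p * DT B p := by
  funext p; unfold DT; rw [fderiv_fun_mul (hA p) (hB p)]; simp; ring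

lemma DT_inv {A : ℝ×ℝ→ℝ} (hA : Differentiable ℝ A) (h0 : ∀ p, A p ≠ 0) :
    DT (fun q => (A q)⁻¹) = fun p => -(DT A p * ((A p)⁻¹ * (A p)⁻¹)) := by
  funext p; unfold DT
  have h : HasFDerivAt (fun q => (A q)⁻¹)
      ((ContinuousLinearMap.smulRight (1 : ℝ →L[ℝ] ℝ) (-((A p) ^ 2)⁻¹)).comp (fderiv ℝ A p)) p :=
    (hasFDerivAt_inv (h0 p)).comp p (hA p).hasFDerivAt
  rw [h.fderiv]
  have h2 := h0 p
  simp [pow_two]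


set_option maxHeartbeats 4000000 in
/-- The substitution `u = r_x/r`, `v = r s` maps solutions of the transformed
polynomial system to solutions of system (3.8). -/
theorem transform_to_38 (r s : ℝ → ℝ → ℝ) (ε : ℝ)
    (hr : ContDiff ℝ (⊤ : ℕ∞) (fun p : ℝ × ℝ => r p.1 p.2))
    (hs : ContDiff ℝ (⊤ : ℕ∞) (fun p : ℝ × ℝ => s p.1 p.2))
    (hrpos : ∀ x t, 0 < r x t)
    (heqr : ∀ x t, pt r x t =
      px (px (px r)) x t
        + 3 * ε * (2 * (r x t)^2 * px (px s) x t + 4 * r x t * px r x t * px s x t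
            - s x t * (px r x t)^2 - s x t * r x t * px (px r) x t)
        + 3 * ε^2 * (s x t)^2 * (r x t)^2 * px r x t)
    (heqs : ∀ x t, pt s x t =
      px (px (px s)) x t
        + 3 * ε * r x t * (s x t * px (px s) x t + 3 * (px s x t)^2)
        + 3 * ε^2 * (r x t)^2 * (s x t)^2 * px s x t) :
    ∀ x t,
      (pt (fun y q => px r y q / r y q) x t =
        px (px (px (fun y q => px r y q / r y q))) x t
          + 3 * (px r x t / r x t) * px (px (fun y q => px r y q / r y q)) x t
          + 3 * (px r x t / r x t)^2 * px (fun y q => px r y q / r y q) x t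
          + 3 * (px (fun y q => px r y q / r y q) x t)^2
          + 3 * ε * px (fun y q =>
              2 * px (px (fun y' q' => r y' q' * s y' q')) y q
                - 3 * (r y q * s y q) * px (fun y' q' => px r y' q' / r y' q') y q
                - 4 * (px r y q / r y q)^2 * (r y q * s y q)) x t
          + 3 * ε^2 * px (fun y q =>
              (r y q * s y q)^2 * (px r y q / r y q)) x t)
      ∧
      (pt (fun y q => r y q * s y q) x t =
        px (px (px (fun y q => r y q * s y q))) x t
          - 3 * px (fun y q =>
              (px r y q / r y q) * px (fun y' q' => r y' q' * s y' q') y q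
                - (px r y q / r y q)^2 * (r y q * s y q)) x t
          + 3 * ε * px (fun y q =>
              3 * (r y q * s y q) * px (fun y' q' => r y' q' * s y' q') y q
                - 4 * (r y q * s y q)^2 * (px r y q / r y q)) x t
          + 3 * ε^2 * (r x t * s x t)^2 * px (fun y q => r y q * s y q) x t) := by
  have h0 : ∀ p : ℝ×ℝ, (fun p : ℝ×ℝ => r p.1 p.2) p ≠ 0 := fun p => (hrpos p.1 p.2).ne'
  have hd0 : Differentiable ℝ (fun p : ℝ×ℝ => r p.1 p.2) := hr.differentiable (by simp)
  have hd1 : Differentiable ℝ (DX (fun p : ℝ×ℝ => r p.1 p.2)) := (contDiff_DX hr).differentiable (by simp)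
  have hd2 : Differentiable ℝ (DX (DX (fun p : ℝ×ℝ => r p.1 p.2))) :=
    (contDiff_DX (contDiff_DX hr)).differentiable (by simp)
  have hd3 : Differentiable ℝ (DX (DX (DX (fun p : ℝ×ℝ => r p.1 p.2)))) :=
    (contDiff_DX (contDiff_DX (contDiff_DX hr))).differentiable (by simp)
  have hg0 : Differentiable ℝ (fun p : ℝ×ℝ => s p.1 p.2) := hs.differentiable (by simp)
  have hg1 : Differentiable ℝ (DX (fun p : ℝ×ℝ => s p.1 p.2)) := (contDiff_DX hs).differentiable (by simp)
  have hg2 : Differentiable ℝ (DX (DX (fun p : ℝ×ℝ => s p.1 p.2))) :=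
    (contDiff_DX (contDiff_DX hs)).differentiable (by simp)
  have hg3 : Differentiable ℝ (DX (DX (DX (fun p : ℝ×ℝ => s p.1 p.2)))) :=
    (contDiff_DX (contDiff_DX (contDiff_DX hs))).differentiable (by simp)
  have hdInv : Differentiable ℝ (fun p : ℝ×ℝ => ((fun p : ℝ×ℝ => r p.1 p.2) p)⁻¹) := fun p =>
    ((differentiableAt_inv (h0 p)).comp p (hd0 p))
  have cU : ContDiff ℝ (⊤ : ℕ∞) (fun p : ℝ×ℝ => DX (fun p : ℝ×ℝ => r p.1 p.2) p * ((fun p : ℝ×ℝ => r p.1 p.2) p)⁻¹) := (contDiff_DX hr).mul (hr.inv h0)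
  have cV : ContDiff ℝ (⊤ : ℕ∞) (fun p : ℝ×ℝ => (fun p : ℝ×ℝ => r p.1 p.2) p * (fun p : ℝ×ℝ => s p.1 p.2) p) := hr.mul hs
  have dU : Differentiable ℝ (fun p : ℝ×ℝ => DX (fun p : ℝ×ℝ => r p.1 p.2) p * ((fun p : ℝ×ℝ => r p.1 p.2) p)⁻¹) := cU.differentiable (by simp)
  have dU1 : Differentiable ℝ (DX (fun p : ℝ×ℝ => DX (fun p : ℝ×ℝ => r p.1 p.2) p * ((fun p : ℝ×ℝ => r p.1 p.2) p)⁻¹)) := (contDiff_DX cU).differentiable (by simp)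
  have dU2 : Differentiable ℝ (DX (DX (fun p : ℝ×ℝ => DX (fun p : ℝ×ℝ => r p.1 p.2) p * ((fun p : ℝ×ℝ => r p.1 p.2) p)⁻¹))) :=
    (contDiff_DX (contDiff_DX cU)).differentiable (by simp)
  have dV : Differentiable ℝ (fun p : ℝ×ℝ => (fun p : ℝ×ℝ => r p.1 p.2) p * (fun p : ℝ×ℝ => s p.1 p.2) p) := cV.differentiable (by simp)
  have dV1 : Differentiable ℝ (DX (fun p : ℝ×ℝ => (fun p : ℝ×ℝ => r p.1 p.2) p * (fun p : ℝ×ℝ => s p.1 p.2) p)) := (contDiff_DX cV).differentiable (by simp)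
  have dV2 : Differentiable ℝ (DX (DX (fun p : ℝ×ℝ => (fun p : ℝ×ℝ => r p.1 p.2) p * (fun p : ℝ×ℝ => s p.1 p.2) p))) :=
    (contDiff_DX (contDiff_DX cV)).differentiable (by simp)
  have dP1 : Differentiable ℝ (fun p : ℝ×ℝ => 2 * DX (DX (fun p : ℝ×ℝ => (fun p : ℝ×ℝ => r p.1 p.2) p * (fun p : ℝ×ℝ => s p.1 p.2) p)) p - 3 * ((fun p : ℝ×ℝ => r p.1 p.2) p * (fun p : ℝ×ℝ => s p.1 p.2) p) * DX (fun p : ℝ×ℝ => DX (fun p : ℝ×ℝ => r p.1 p.2) p * ((fun p : ℝ×ℝ => r p.1 p.2) p)⁻¹) p - 4 * (DX (fun p : ℝ×ℝ => r p.1 p.2) p * ((fun p : ℝ×ℝ => r p.1 p.2) p)⁻¹)^2 * ((fun p : ℝ×ℝ => r p.1 p.2) p * (fun p : ℝ×ℝ => s p.1 p.2) p)) := by fun_prop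
  have dP2 : Differentiable ℝ (fun p : ℝ×ℝ => ((fun p : ℝ×ℝ => r p.1 p.2) p * (fun p : ℝ×ℝ => s p.1 p.2) p)^2 * (DX (fun p : ℝ×ℝ => r p.1 p.2) p * ((fun p : ℝ×ℝ => r p.1 p.2) p)⁻¹)) := by fun_prop
  have dQ1 : Differentiable ℝ (fun p : ℝ×ℝ => (DX (fun p : ℝ×ℝ => r p.1 p.2) p * ((fun p : ℝ×ℝ => r p.1 p.2) p)⁻¹) * DX (fun p : ℝ×ℝ => (fun p : ℝ×ℝ => r p.1 p.2) p * (fun p : ℝ×ℝ => s p.1 p.2) p) p - (DX (fun p : ℝ×ℝ => r p.1 p.2) p * ((fun p : ℝ×ℝ => r p.1 p.2) p)⁻¹)^2 * ((fun p : ℝ×ℝ => r p.1 p.2) p * (fun p : ℝ×ℝ => s p.1 p.2) p)) := by fun_prop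
  have dQ2 : Differentiable ℝ (fun p : ℝ×ℝ => 3 * ((fun p : ℝ×ℝ => r p.1 p.2) p * (fun p : ℝ×ℝ => s p.1 p.2) p) * DX (fun p : ℝ×ℝ => (fun p : ℝ×ℝ => r p.1 p.2) p * (fun p : ℝ×ℝ => s p.1 p.2) p) p - 4 * ((fun p : ℝ×ℝ => r p.1 p.2) p * (fun p : ℝ×ℝ => s p.1 p.2) p)^2 * (DX (fun p : ℝ×ℝ => r p.1 p.2) p * ((fun p : ℝ×ℝ => r p.1 p.2) p)⁻¹)) := by fun_prop
  have e1 : ∀ y q, px r y q = DX (fun p : ℝ×ℝ => r p.1 p.2) (y,q) := px_eq hd0 (fun _ _ => rfl)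
  have e2 : ∀ y q, px (px r) y q = DX (DX (fun p : ℝ×ℝ => r p.1 p.2)) (y,q) := px_eq hd1 e1
  have e3 : ∀ y q, px (px (px r)) y q = DX (DX (DX (fun p : ℝ×ℝ => r p.1 p.2))) (y,q) := px_eq hd2 e2
  have et : ∀ y q, pt r y q = DT (fun p : ℝ×ℝ => r p.1 p.2) (y,q) := pt_eq hd0 (fun _ _ => rfl)
  have f1 : ∀ y q, px s y q = DX (fun p : ℝ×ℝ => s p.1 p.2) (y,q) := px_eq hg0 (fun _ _ => rfl)
  have f2 : ∀ y q, px (px s) y q = DX (DX (fun p : ℝ×ℝ => s p.1 p.2)) (y,q) := px_eq hg1 f1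
  have f3 : ∀ y q, px (px (px s)) y q = DX (DX (DX (fun p : ℝ×ℝ => s p.1 p.2))) (y,q) := px_eq hg2 f2
  have ft : ∀ y q, pt s y q = DT (fun p : ℝ×ℝ => s p.1 p.2) (y,q) := pt_eq hg0 (fun _ _ => rfl)
  have hR : DT (fun p : ℝ×ℝ => r p.1 p.2) = (fun p : ℝ×ℝ => DX (DX (DX (fun p : ℝ×ℝ => r p.1 p.2))) p + 3 * ε * (2 * ((fun p : ℝ×ℝ => r p.1 p.2) p)^2 * DX (DX (fun p : ℝ×ℝ => s p.1 p.2)) p + 4 * (fun p : ℝ×ℝ => r p.1 p.2) p * DX (fun p : ℝ×ℝ => r p.1 p.2) p * DX (fun p : ℝ×ℝ => s p.1 p.2) p - (fun p : ℝ×ℝ => s p.1 p.2) p * (DX (fun p : ℝ×ℝ => r p.1 p.2) p)^2 - (fun p : ℝ×ℝ => s p.1 p.2) p * (fun p : ℝ×ℝ => r p.1 p.2) p * DX (DX (fun p : ℝ×ℝ => r p.1 p.2)) p) + 3 * ε^2 * ((fun p : ℝ×ℝ => s p.1 p.2) p)^2 * ((fun p : ℝ×ℝ => r p.1 p.2) p)^2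 * DX (fun p : ℝ×ℝ => r p.1 p.2) p) := by
    funext p
    have h := heqr p.1 p.2
    simp only [et, e3, e2, f2, f1, e1] at h
    simpa using h
  have hS : DT (fun p : ℝ×ℝ => s p.1 p.2) = (fun p : ℝ×ℝ => DX (DX (DX (fun p : ℝ×ℝ => s p.1 p.2))) p + 3 * ε * (fun p : ℝ×ℝ => r p.1 p.2) p * ((fun p : ℝ×ℝ => s p.1 p.2) p * DX (DX (fun p : ℝ×ℝ => s p.1 p.2)) p + 3 * (DX (fun p : ℝ×ℝ => s p.1 p.2) p)^2) + 3 * ε^2 * ((fun p : ℝ×ℝ => r p.1 p.2) p)^2 * ((fun p : ℝ×ℝ => s p.1 p.2) p)^2 * DX (fun p : ℝ×ℝ => s p.1 p.2) p) := by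
    funext p
    have h := heqs p.1 p.2
    simp only [ft, f3, f2, f1, e1] at h
    simpa using h
  have hcomm : DT (DX (fun p : ℝ×ℝ => r p.1 p.2)) = DX (DT (fun p : ℝ×ℝ => r p.1 p.2)) := DT_DX_comm hr
  rw [hR] at hcomm
  have hIX : DX (fun p : ℝ×ℝ => ((fun p : ℝ×ℝ => r p.1 p.2) p)⁻¹)
      = fun p => -(DX (fun p : ℝ×ℝ => r p.1 p.2) p * (((fun p : ℝ×ℝ => r p.1 p.2) p)⁻¹ * ((fun p : ℝ×ℝ => r p.1 p.2) p)⁻¹)) := DX_inv hd0 h0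
  have hIT : DT (fun p : ℝ×ℝ => ((fun p : ℝ×ℝ => r p.1 p.2) p)⁻¹)
      = fun p => -(DT (fun p : ℝ×ℝ => r p.1 p.2) p * (((fun p : ℝ×ℝ => r p.1 p.2) p)⁻¹ * ((fun p : ℝ×ℝ => r p.1 p.2) p)⁻¹)) := DT_inv hd0 h0
  have uu : ∀ y q, px r y q / r y q = (fun p : ℝ×ℝ => DX (fun p : ℝ×ℝ => r p.1 p.2) p * ((fun p : ℝ×ℝ => r p.1 p.2) p)⁻¹) (y,q) := by
    intro y q; rw [e1, div_eq_mul_inv]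
  have hu1 : ∀ y q, px (fun y' q' => px r y' q' / r y' q') y q = DX (fun p : ℝ×ℝ => DX (fun p : ℝ×ℝ => r p.1 p.2) p * ((fun p : ℝ×ℝ => r p.1 p.2) p)⁻¹) (y,q) :=
    px_eq dU uu
  have hu2 : ∀ y q, px (px (fun y' q' => px r y' q' / r y' q')) y q = DX (DX (fun p : ℝ×ℝ => DX (fun p : ℝ×ℝ => r p.1 p.2) p * ((fun p : ℝ×ℝ => r p.1 p.2) p)⁻¹)) (y,q) :=
    px_eq dU1 hu1
  have hu3 : ∀ y q, px (px (px (fun y' q' => px r y' q' / r y' q'))) y q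
      = DX (DX (DX (fun p : ℝ×ℝ => DX (fun p : ℝ×ℝ => r p.1 p.2) p * ((fun p : ℝ×ℝ => r p.1 p.2) p)⁻¹))) (y,q) := px_eq dU2 hu2
  have hut : ∀ y q, pt (fun y' q' => px r y' q' / r y' q') y q = DT (fun p : ℝ×ℝ => DX (fun p : ℝ×ℝ => r p.1 p.2) p * ((fun p : ℝ×ℝ => r p.1 p.2) p)⁻¹) (y,q) :=
    pt_eq dU uu
  have vv : ∀ y q, r y q * s y q = (fun p : ℝ×ℝ => (fun p : ℝ×ℝ => r p.1 p.2) p * (fun p : ℝ×ℝ => s p.1 p.2) p) (y,q) := fun _ _ => rfl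
  have hv1 : ∀ y q, px (fun y' q' => r y' q' * s y' q') y q = DX (fun p : ℝ×ℝ => (fun p : ℝ×ℝ => r p.1 p.2) p * (fun p : ℝ×ℝ => s p.1 p.2) p) (y,q) :=
    px_eq dV vv
  have hv2 : ∀ y q, px (px (fun y' q' => r y' q' * s y' q')) y q = DX (DX (fun p : ℝ×ℝ => (fun p : ℝ×ℝ => r p.1 p.2) p * (fun p : ℝ×ℝ => s p.1 p.2) p)) (y,q) :=
    px_eq dV1 hv1
  have hv3 : ∀ y q, px (px (px (fun y' q' => r y' q' * s y' q'))) y q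
      = DX (DX (DX (fun p : ℝ×ℝ => (fun p : ℝ×ℝ => r p.1 p.2) p * (fun p : ℝ×ℝ => s p.1 p.2) p))) (y,q) := px_eq dV2 hv2
  have hvt : ∀ y q, pt (fun y' q' => r y' q' * s y' q') y q = DT (fun p : ℝ×ℝ => (fun p : ℝ×ℝ => r p.1 p.2) p * (fun p : ℝ×ℝ => s p.1 p.2) p) (y,q) :=
    pt_eq dV vv
  have pp1 : ∀ y q, (2 * px (px (fun y' q' => r y' q' * s y' q')) y q
        - 3 * (r y q * s y q) * px (fun y' q' => px r y' q' / r y' q') y q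
        - 4 * (px r y q / r y q)^2 * (r y q * s y q)) = (fun p : ℝ×ℝ => 2 * DX (DX (fun p : ℝ×ℝ => (fun p : ℝ×ℝ => r p.1 p.2) p * (fun p : ℝ×ℝ => s p.1 p.2) p)) p - 3 * ((fun p : ℝ×ℝ => r p.1 p.2) p * (fun p : ℝ×ℝ => s p.1 p.2) p) * DX (fun p : ℝ×ℝ => DX (fun p : ℝ×ℝ => r p.1 p.2) p * ((fun p : ℝ×ℝ => r p.1 p.2) p)⁻¹) p - 4 * (DX (fun p : ℝ×ℝ => r p.1 p.2) p * ((fun p : ℝ×ℝ => r p.1 p.2) p)⁻¹)^2 * ((fun p : ℝ×ℝ => r p.1 p.2) p * (fun p : ℝ×ℝ => s p.1 p.2) p)) (y,q) := by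
    intro y q; rw [hv2, hu1, e1, div_eq_mul_inv]
  have hp1 : ∀ y q, px (fun y q =>
      2 * px (px (fun y' q' => r y' q' * s y' q')) y q
        - 3 * (r y q * s y q) * px (fun y' q' => px r y' q' / r y' q') y q
        - 4 * (px r y q / r y q)^2 * (r y q * s y q)) y q = DX (fun p : ℝ×ℝ => 2 * DX (DX (fun p : ℝ×ℝ => (fun p : ℝ×ℝ => r p.1 p.2) p * (fun p : ℝ×ℝ => s p.1 p.2) p)) p - 3 * ((fun p : ℝ×ℝ => r p.1 p.2) p * (fun p : ℝ×ℝ => s p.1 p.2) p) * DX (fun p : ℝ×ℝ => DX (fun p : ℝ×ℝ => r p.1 p.2) p * ((fun p : ℝ×ℝ => r p.1 p.2) p)⁻¹) p - 4 * (DX (fun p : ℝ×ℝ => r p.1 p.2) p * ((fun p : ℝ×ℝ => r p.1 p.2) p)⁻¹)^2 * ((fun p : ℝ×ℝ => r p.1 p.2) p * (fun p : ℝ×ℝ => s p.1 p.2) p)) (y,q) :=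
    px_eq dP1 pp1
  have pp2 : ∀ y q, ((r y q * s y q)^2 * (px r y q / r y q)) = (fun p : ℝ×ℝ => ((fun p : ℝ×ℝ => r p.1 p.2) p * (fun p : ℝ×ℝ => s p.1 p.2) p)^2 * (DX (fun p : ℝ×ℝ => r p.1 p.2) p * ((fun p : ℝ×ℝ => r p.1 p.2) p)⁻¹)) (y,q) := by
    intro y q; rw [e1, div_eq_mul_inv]
  have hp2 : ∀ y q, px (fun y q => (r y q * s y q)^2 * (px r y q / r y q)) y q
      = DX (fun p : ℝ×ℝ => ((fun p : ℝ×ℝ => r p.1 p.2) p * (fun p : ℝ×ℝ => s p.1 p.2) p)^2 * (DX (fun p : ℝ×ℝ => r p.1 p.2) p * ((fun p : ℝ×ℝ => r p.1 p.2) p)⁻¹)) (y,q) := px_eq dP2 pp2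
  have qq1 : ∀ y q, ((px r y q / r y q) * px (fun y' q' => r y' q' * s y' q') y q
        - (px r y q / r y q)^2 * (r y q * s y q)) = (fun p : ℝ×ℝ => (DX (fun p : ℝ×ℝ => r p.1 p.2) p * ((fun p : ℝ×ℝ => r p.1 p.2) p)⁻¹) * DX (fun p : ℝ×ℝ => (fun p : ℝ×ℝ => r p.1 p.2) p * (fun p : ℝ×ℝ => s p.1 p.2) p) p - (DX (fun p : ℝ×ℝ => r p.1 p.2) p * ((fun p : ℝ×ℝ => r p.1 p.2) p)⁻¹)^2 * ((fun p : ℝ×ℝ => r p.1 p.2) p * (fun p : ℝ×ℝ => s p.1 p.2) p)) (y,q) := by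
    intro y q; rw [hv1, e1, div_eq_mul_inv]
  have hq1 : ∀ y q, px (fun y q =>
      (px r y q / r y q) * px (fun y' q' => r y' q' * s y' q') y q
        - (px r y q / r y q)^2 * (r y q * s y q)) y q = DX (fun p : ℝ×ℝ => (DX (fun p : ℝ×ℝ => r p.1 p.2) p * ((fun p : ℝ×ℝ => r p.1 p.2) p)⁻¹) * DX (fun p : ℝ×ℝ => (fun p : ℝ×ℝ => r p.1 p.2) p * (fun p : ℝ×ℝ => s p.1 p.2) p) p - (DX (fun p : ℝ×ℝ => r p.1 p.2) p * ((fun p : ℝ×ℝ => r p.1 p.2) p)⁻¹)^2 * ((fun p : ℝ×ℝ => r p.1 p.2) p * (fun p : ℝ×ℝ => s p.1 p.2) p)) (y,q) :=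
    px_eq dQ1 qq1
  have qq2 : ∀ y q, (3 * (r y q * s y q) * px (fun y' q' => r y' q' * s y' q') y q
        - 4 * (r y q * s y q)^2 * (px r y q / r y q)) = (fun p : ℝ×ℝ => 3 * ((fun p : ℝ×ℝ => r p.1 p.2) p * (fun p : ℝ×ℝ => s p.1 p.2) p) * DX (fun p : ℝ×ℝ => (fun p : ℝ×ℝ => r p.1 p.2) p * (fun p : ℝ×ℝ => s p.1 p.2) p) p - 4 * ((fun p : ℝ×ℝ => r p.1 p.2) p * (fun p : ℝ×ℝ => s p.1 p.2) p)^2 * (DX (fun p : ℝ×ℝ => r p.1 p.2) p * ((fun p : ℝ×ℝ => r p.1 p.2) p)⁻¹)) (y,q) := by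
    intro y q; rw [hv1, e1, div_eq_mul_inv]
  have hq2 : ∀ y q, px (fun y q =>
      3 * (r y q * s y q) * px (fun y' q' => r y' q' * s y' q') y q
        - 4 * (r y q * s y q)^2 * (px r y q / r y q)) y q = DX (fun p : ℝ×ℝ => 3 * ((fun p : ℝ×ℝ => r p.1 p.2) p * (fun p : ℝ×ℝ => s p.1 p.2) p) * DX (fun p : ℝ×ℝ => (fun p : ℝ×ℝ => r p.1 p.2) p * (fun p : ℝ×ℝ => s p.1 p.2) p) p - 4 * ((fun p : ℝ×ℝ => r p.1 p.2) p * (fun p : ℝ×ℝ => s p.1 p.2) p)^2 * (DX (fun p : ℝ×ℝ => r p.1 p.2) p * ((fun p : ℝ×ℝ => r p.1 p.2) p)⁻¹)) (y,q) :=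
    px_eq dQ2 qq2
  intro x t
  have hne : r x t ≠ 0 := (hrpos x t).ne'
  constructor
  · rw [hut x t, hu3 x t, hu2 x t, hu1 x t, hp1 x t, hp2 x t, e1 x t]
    simp (disch := fun_prop) only [DT_mul, DX_mul, DX_add, DX_sub, DX_neg, DX_const,
      hIX, hIT, hR, hS, hcomm, pow_two]
    field_simp
    ring
  · rw [hvt x t, hv3 x t, hq1 x t, hq2 x t, hv1 x t]
    simp (disch := fun_prop) only [DT_mul, DX_mul, DX_add, DX_sub, DX_neg, DX_const,
      hIX, hIT, hR, hS, hcomm, pow_two]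
    field_simp
    ring
end
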